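/- Let u, v : ℕ → V be sequences with u⁰ = v⁰, ‖ι u⁰‖_H = 1, and uʲ ≠ 0, vʲ ≠ 0 for all j, satisfying for all j ≥ 1 and all test functions w ∈ V the two iterations a_β(uʲ, w) = μ(u^{j−1}) · ( ι u^{j−1}/‖ι u^{j−1}‖_H , ι w )_H and a_β(vʲ, w) = ( ι v^{j−1}/‖ι v^{j−1}‖_H , ι w )_H. Then uʲ = μ(u^{j−1}) · vʲ for all j ≥ 1. -/

import Mathlib

/-! Gårding's inequality makes `a_β` coercive, so a vector `z` is determined by the functional
`a_β(z, ·)`. Hence `uʲ = μ(u^{j-1}) vʲ` as soon as `μ(u^{j-1})` times the normalized `ι u^{j-1}`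
equals `μ(u^{j-1})` times the normalized `ι v^{j-1}`. This holds at `j = 1` because `u⁰ = v⁰`, and
propagates because `μ ≥ 0`: a positive multiple has the same normalization, while a zero multiple
is the zero vector, whose Rayleigh quotient vanishes. -/

section CoerciveForm

variable {V : Type*} [NormedAddCommGroup V] [InnerProductSpace ℂ V]
  {b : V →ₗ⋆[ℂ] V →ₗ[ℂ] ℂ} {α : ℝ}

theorem eq_zero_of_forall_coercive_eq_zero (hα : 0 < α) (hb : ∀ z, α * ‖z‖ ^ 2 ≤ (b z z).re)
    {z : V} (hz : ∀ w, b z w = 0) : z = 0 := by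
  have h := hb z
  rw [hz z, Complex.zero_re] at h
  have : ‖z‖ ^ 2 ≤ 0 := by nlinarith
  simpa using this

theorem eq_ofReal_smul_of_forall_coercive_eq (hα : 0 < α) (hb : ∀ z, α * ‖z‖ ^ 2 ≤ (b z z).re)
    {z y : V} {r : ℝ} (h : ∀ w, b z w = r * b y w) : z = (r : ℂ) • y := by
  refine sub_eq_zero.mp (eq_zero_of_forall_coercive_eq_zero hα hb fun w => ?_)
  simp only [map_sub, LinearMap.sub_apply, map_smulₛₗ, LinearMap.smul_apply, Complex.conj_ofReal,
    smul_eq_mul, h, sub_self]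

end CoerciveForm

section ShiftedForm

variable {V H : Type*} [NormedAddCommGroup V] [InnerProductSpace ℂ V]
  [NormedAddCommGroup H] [InnerProductSpace ℂ H]
  (a : V →ₗ⋆[ℂ] V →ₗ[ℂ] ℂ) (ι : V →L[ℂ] H) (β : ℝ)

noncomputable def shiftedForm : V →ₗ⋆[ℂ] V →ₗ[ℂ] ℂ :=
  a + (β : ℂ) • ((innerₛₗ ℂ).comp (ι : V →ₗ[ℂ] H)).compl₂ (ι : V →ₗ[ℂ] H)

@[simp]
theorem shiftedForm_apply (z w : V) :
    shiftedForm a ι β z w = a z w + (β : ℂ) * inner ℂ (ι z) (ι w) := by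
  simp [shiftedForm]

theorem re_shiftedForm_self (z : V) :
    (shiftedForm a ι β z z).re = (a z z).re + β * ‖ι z‖ ^ 2 := by
  simp [inner_self_eq_norm_sq_to_K, ← Complex.ofReal_pow]

theorem shiftedForm_coercive {α : ℝ} (hG : ∀ z, α * ‖z‖ ^ 2 - β * ‖ι z‖ ^ 2 ≤ (a z z).re)
    (z : V) : α * ‖z‖ ^ 2 ≤ (shiftedForm a ι β z z).re := by
  linarith [hG z, re_shiftedForm_self a ι β z]

noncomputable def rayleighQuotient (z : V) : ℝ :=
  ((a z z).re + β * ‖ι z‖ ^ 2) / ‖ι z‖ ^ 2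

theorem rayleighQuotient_nonneg {α : ℝ} (hα : 0 < α)
    (hG : ∀ z, α * ‖z‖ ^ 2 - β * ‖ι z‖ ^ 2 ≤ (a z z).re) (z : V) :
    0 ≤ rayleighQuotient a ι β z := by
  have := shiftedForm_coercive a ι β hG z
  rw [re_shiftedForm_self] at this
  exact div_nonneg (le_trans (by positivity) this) (by positivity)

theorem inv_norm_smul_ofReal_smul {c : ℝ} (hc : 0 < c) (x : H) :
    (‖(c : ℂ) • x‖ : ℂ)⁻¹ • (c : ℂ) • x = (‖x‖ : ℂ)⁻¹ • x := by
  rw [norm_smul, Complex.norm_real, Real.norm_of_nonneg hc.le, smul_smul, Complex.ofReal_mul,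
    mul_inv_rev, mul_assoc, inv_mul_cancel₀ (by exact_mod_cast hc.ne'), mul_one]

theorem rayleighQuotient_smul_inv_norm_smul {c : ℝ} (hc : 0 ≤ c) (z : V) :
    (rayleighQuotient a ι β ((c : ℂ) • z) : ℂ) • (‖ι ((c : ℂ) • z)‖ : ℂ)⁻¹ • ι ((c : ℂ) • z) =
      (rayleighQuotient a ι β ((c : ℂ) • z) : ℂ) • (‖ι z‖ : ℂ)⁻¹ • ι z := by
  rcases hc.eq_or_lt with rfl | hc
  · simp [rayleighQuotient]
  · rw [map_smul, inv_norm_smul_ofReal_smul hc]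

end ShiftedForm

theorem stmt_6_general {V H : Type*}
    [NormedAddCommGroup V] [InnerProductSpace ℂ V]
    [NormedAddCommGroup H] [InnerProductSpace ℂ H]
    (ι : V →L[ℂ] H)
    (a : V →ₗ⋆[ℂ] V →ₗ[ℂ] ℂ)
    (α β : ℝ) (hα : 0 < α)
    (hGarding : ∀ u : V, α * ‖u‖ ^ 2 - β * ‖ι u‖ ^ 2 ≤ (a u u).re)
    (u v : ℕ → V) (h0 : u 0 = v 0)
    (hiteru : ∀ j : ℕ, ∀ w : V,
      a (u (j + 1)) w + (β : ℂ) * (inner ℂ (ι (u (j + 1))) (ι w) : ℂ) =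
        ((((a (u j) (u j)).re + β * ‖ι (u j)‖ ^ 2) / ‖ι (u j)‖ ^ 2 : ℝ) : ℂ) *
          (inner ℂ ((‖ι (u j)‖ : ℂ)⁻¹ • ι (u j)) (ι w) : ℂ))
    (hiterv : ∀ j : ℕ, ∀ w : V,
      a (v (j + 1)) w + (β : ℂ) * (inner ℂ (ι (v (j + 1))) (ι w) : ℂ) =
        (inner ℂ ((‖ι (v j)‖ : ℂ)⁻¹ • ι (v j)) (ι w) : ℂ)) :
    ∀ j : ℕ,
      u (j + 1) =
        ((((a (u j) (u j)).re + β * ‖ι (u j)‖ ^ 2) / ‖ι (u j)‖ ^ 2 : ℝ) : ℂ) • v (j + 1) := by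
  set μ := rayleighQuotient a ι β
  have step (j : ℕ) (hj : (μ (u j) : ℂ) • (‖ι (u j)‖ : ℂ)⁻¹ • ι (u j) =
      (μ (u j) : ℂ) • (‖ι (v j)‖ : ℂ)⁻¹ • ι (v j)) :
      u (j + 1) = (μ (u j) : ℂ) • v (j + 1) := by
    refine eq_ofReal_smul_of_forall_coercive_eq hα (shiftedForm_coercive a ι β hGarding) fun w => ?_
    have hinner := congrArg (inner ℂ · (ι w)) hj
    simp only [inner_smul_left _ _ (μ (u j) : ℂ), Complex.conj_ofReal] at hinner
    rw [shiftedForm_apply, shiftedForm_apply, hiteru, hiterv]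
    exact hinner
  intro j
  induction j with
  | zero => exact step 0 (by rw [h0])
  | succ j ih =>
    refine step (j + 1) ?_
    rw [ih]
    exact rayleighQuotient_smul_inv_norm_smul a ι β (rayleighQuotient_nonneg a ι β hα hGarding _) _

/-- Lemma 3.4, relation between the two power iterations: with the Gårding
framework, let `u, v : ℕ → V` be sequences of nonzero vectors with `u⁰ = v⁰`,
`‖ι u⁰‖ = 1`, where `u` follows the Rayleigh-quotient inverse power iteration
`a_β(uʲ, w) = μ(u^{j-1}) (ι u^{j-1}/‖ι u^{j-1}‖, ι w)_H` and `v` follows the plain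
iteration `a_β(vʲ, w) = (ι v^{j-1}/‖ι v^{j-1}‖, ι w)_H`.  Then `uʲ = μ(u^{j-1}) vʲ`
for all `j ≥ 1`, where `μ(z) = a_β(z,z)/‖ι z‖²`. -/
theorem stmt_6 {V H : Type*}
    [NormedAddCommGroup V] [InnerProductSpace ℂ V] [CompleteSpace V]
    [NormedAddCommGroup H] [InnerProductSpace ℂ H] [CompleteSpace H]
    (ι : V →L[ℂ] H) (hι : Function.Injective ι)
    (a : V →ₗ⋆[ℂ] V →ₗ[ℂ] ℂ)
    (hHerm : ∀ u v : V, a u v = (starRingEnd ℂ) (a v u))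
    (C : ℝ) (hcont : ∀ u v : V, ‖a u v‖ ≤ C * ‖u‖ * ‖v‖)
    (α β : ℝ) (hα : 0 < α) (hβ : 0 ≤ β)
    (hGarding : ∀ u : V, α * ‖u‖ ^ 2 - β * ‖ι u‖ ^ 2 ≤ (a u u).re)
    (u v : ℕ → V) (h0 : u 0 = v 0) (hnorm0 : ‖ι (u 0)‖ = 1)
    (hu : ∀ j, u j ≠ 0) (hv : ∀ j, v j ≠ 0)
    (hiteru : ∀ j : ℕ, ∀ w : V,
      a (u (j + 1)) w + (β : ℂ) * (inner ℂ (ι (u (j + 1))) (ι w) : ℂ) =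
        ((((a (u j) (u j)).re + β * ‖ι (u j)‖ ^ 2) / ‖ι (u j)‖ ^ 2 : ℝ) : ℂ) *
          (inner ℂ ((‖ι (u j)‖ : ℂ)⁻¹ • ι (u j)) (ι w) : ℂ))
    (hiterv : ∀ j : ℕ, ∀ w : V,
      a (v (j + 1)) w + (β : ℂ) * (inner ℂ (ι (v (j + 1))) (ι w) : ℂ) =
        (inner ℂ ((‖ι (v j)‖ : ℂ)⁻¹ • ι (v j)) (ι w) : ℂ)) :
    ∀ j : ℕ,
      u (j + 1) =
        ((((a (u j) (u j)).re + β * ‖ι (u j)‖ ^ 2) / ‖ι (u j)‖ ^ 2 : ℝ) : ℂ) • v (j + 1) :=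
  stmt_6_general ι a α β hα hGarding u v h0 hiteru hiterv
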